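/- Let c ≥ 7, S = ℚ[x_0, …, x_{c−1}] with indices read modulo c, q_i = x_i² − x_{i−1}x_{i−3}, and let L ⊆ S be the ideal generated by q_1, …, q_{c−1} together with all quadratic monomials x_i x_j of cyclic distance ≥ 3. Then for a linear form ℓ ∈ S₁, one has ℓ·q_0 ∈ L if and only if ℓ lies in the ℚ-span of x_2, x_3, …, x_{c−3}. (That is, the degree-1 part of the colon ideal (L : q_0) equals (x_2, …, x_{c−3})₁.) -/

import Mathlib

/-!
Send `x_0 ↦ 1`, `x_1 ↦ t²`, `x_{-2} ↦ t⁴`, `x_{-1} ↦ t⁵` and all other variables to `0` in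
`ℚ[t]/(t⁶)`. This kills every generator of `L` (e.g. `q_1 ↦ t⁴ - t⁴`, `x_1 x_{-2} ↦ t⁶`), sends
`q_0` to `1`, and sends a linear form `∑ aᵢ xᵢ` to `a_0 + a_1 t² + a_{-2} t⁴ + a_{-1} t⁵`; so
`ℓ q_0 ∈ L` forces these four coefficients to vanish. Conversely, `x_n q_0` is a combination of
far monomials, together with `q_3` for `n = 2` and `q_{-3}` for `n = c - 3`.
-/

open MvPolynomial

/-- The binomial quadric `q_i = x_i² − x_{i−1} x_{i−3}` (indices modulo `c`). -/
noncomputable def binQuadric (c : ℕ) [NeZero c] (i : ZMod c) : MvPolynomial (ZMod c) ℚ :=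
  X i ^ 2 - X (i - 1) * X (i - 3)

/-- The ideal `L` generated by `q_1, …, q_{c−1}` together with all quadratic monomials
`x_i x_j` of cyclic distance `≥ 3`. -/
noncomputable def colonSourceIdeal (c : ℕ) [NeZero c] : Ideal (MvPolynomial (ZMod c) ℚ) :=
  Ideal.span
    ({p | ∃ i : ZMod c, i ≠ 0 ∧ p = binQuadric c i} ∪
     {p | ∃ i j : ZMod c, 3 ≤ (i - j).val ∧ 3 ≤ (j - i).val ∧ p = X i * X j})

theorem pow_dvd_pow_sub_pow {R : Type*} [CommRing R] (x : R) {n a b : ℕ}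
    (h : a = b ∨ n ≤ a ∧ n ≤ b) : x ^ n ∣ x ^ a - x ^ b := by
  rcases h with rfl | ⟨ha, hb⟩
  · simp
  · exact dvd_sub (pow_dvd_pow x ha) (pow_dvd_pow x hb)

theorem dvd_of_dvd_mul_one_sub {R : Type*} [CommRing R] {a b f : R}
    (h : a ∣ f * (1 - b)) (hb : a ∣ b) : a ∣ f := by
  have hf : f = f * (1 - b) + f * b := by ring
  exact hf ▸ dvd_add h (dvd_mul_of_dvd_right hb f)

theorem Polynomial.coeff_sum_smul_X_pow {R ι : Type*} [Semiring R] [Fintype ι]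
    (a : ι → R) (w : ι → ℕ) {i : ι} (hw : ∀ j, w j = w i → j = i) :
    (∑ j, a j • (X : Polynomial R) ^ w j).coeff (w i) = a i := by
  rw [finsetSum_coeff, Finset.sum_eq_single i]
  · simp
  · intro j _ hj
    simp [coeff_X_pow, Ne.symm (mt (hw j) hj)]
  · simp

namespace ZMod

variable {c : ℕ}

theorem natCast_ne_zero_of_lt {k : ℕ} (hk : 0 < k) (hkc : k < c) : (k : ZMod c) ≠ 0 := by
  rw [Ne, natCast_eq_zero_iff]
  exact Nat.not_dvd_of_pos_of_lt hk hkc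

theorem natCast_sub_self_left {k : ℕ} (hk : k ≤ c) : ((c - k : ℕ) : ZMod c) = -k := by
  rw [Nat.cast_sub hk, natCast_self, zero_sub]

theorem val_le_two {d : ZMod c} (hd : d = 0 ∨ d = 1 ∨ d = 2) : d.val ≤ 2 := by
  rcases hd with rfl | rfl | rfl
  · simp
  · exact (val_one_eq_one_mod c).trans_le ((Nat.mod_le _ _).trans (by norm_num))
  · exact (val_two_eq_two_mod c).trans_le (Nat.mod_le _ _)

end ZMod

section Membership

variable {c : ℕ} [NeZero c]

theorem binQuadric_mem {i : ZMod c} (hi : i ≠ 0) : binQuadric c i ∈ colonSourceIdeal c :=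
  Ideal.subset_span (Or.inl ⟨i, hi, rfl⟩)

theorem X_mul_X_mem {i j : ZMod c} {d : ℕ} (hij : i - j = d) (hd : 3 ≤ d) (hdc : d + 3 ≤ c) :
    X i * X j ∈ colonSourceIdeal c := by
  have hd0 : (d : ZMod c) ≠ 0 := ZMod.natCast_ne_zero_of_lt (by omega) (by omega)
  refine Ideal.subset_span (Or.inr ⟨i, j, ?_, ?_, rfl⟩)
  · rw [hij, ZMod.val_natCast_of_lt (by omega)]
    exact hd
  · rw [← neg_sub, hij, ZMod.neg_val, if_neg hd0, ZMod.val_natCast_of_lt (by omega)]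
    omega

theorem X_mul_binQuadric_zero_mem_of_far {n : ℕ} (h3 : 3 ≤ n) (h4 : n + 4 ≤ c) :
    X (n : ZMod c) * binQuadric c 0 ∈ colonSourceIdeal c := by
  have hq : X (n : ZMod c) * binQuadric c 0 =
      X 0 * (X (n : ZMod c) * X 0) - X (-3 : ZMod c) * (X (n : ZMod c) * X (-1)) := by
    simp only [binQuadric, zero_sub]; ring
  rw [hq]
  exact sub_mem (Ideal.mul_mem_left _ _ (X_mul_X_mem (d := n) (sub_zero _) h3 (by omega)))
    (Ideal.mul_mem_left _ _ (X_mul_X_mem (d := n + 1) (by push_cast; ring) (by omega) (by omega)))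

theorem X_two_mul_binQuadric_zero_mem (hc : 6 ≤ c) :
    X 2 * binQuadric c 0 ∈ colonSourceIdeal c := by
  have hq : X 2 * binQuadric c 0 =
      X 3 * (X 3 * X 0) - X 0 * binQuadric c 3 - X (-3) * (X 2 * X (-1)) := by
    simp only [binQuadric, zero_sub, sub_self]; norm_num; ring
  have h3 : (3 : ZMod c) ≠ 0 := by
    exact_mod_cast ZMod.natCast_ne_zero_of_lt (c := c) (k := 3) (by omega) (by omega)
  rw [hq]
  refine sub_mem (sub_mem ?_ ?_) ?_
  · exact Ideal.mul_mem_left _ _ (X_mul_X_mem (d := 3) (by simp) le_rfl (by omega))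
  · exact Ideal.mul_mem_left _ _ (binQuadric_mem h3)
  · exact Ideal.mul_mem_left _ _ (X_mul_X_mem (d := 3) (by push_cast; ring) le_rfl (by omega))

theorem X_neg_three_mul_binQuadric_zero_mem (hc : 6 ≤ c) :
    X (-3) * binQuadric c 0 ∈ colonSourceIdeal c := by
  have hq : X (-3) * binQuadric c 0 =
      X 0 * (X 0 * X (-3)) - X (-1) * binQuadric c (-3) - X (-6) * (X (-1) * X (-4)) := by
    simp only [binQuadric, zero_sub]; ring_nf
  have h3 : (-3 : ZMod c) ≠ 0 := by
    rw [neg_ne_zero]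
    exact_mod_cast ZMod.natCast_ne_zero_of_lt (c := c) (k := 3) (by omega) (by omega)
  rw [hq]
  refine sub_mem (sub_mem ?_ ?_) ?_
  · exact Ideal.mul_mem_left _ _ (X_mul_X_mem (d := 3) (by push_cast; ring) le_rfl (by omega))
  · exact Ideal.mul_mem_left _ _ (binQuadric_mem h3)
  · exact Ideal.mul_mem_left _ _ (X_mul_X_mem (d := 3) (by push_cast; ring) le_rfl (by omega))

theorem X_natCast_mul_binQuadric_zero_mem (hc : 6 ≤ c) {n : ℕ} (h2 : 2 ≤ n) (h3 : n ≤ c - 3) :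
    X (n : ZMod c) * binQuadric c 0 ∈ colonSourceIdeal c := by
  rcases eq_or_lt_of_le h2 with rfl | h2
  · exact_mod_cast X_two_mul_binQuadric_zero_mem hc
  rcases eq_or_lt_of_le h3 with rfl | h3
  · rw [ZMod.natCast_sub_self_left (by omega)]
    exact_mod_cast X_neg_three_mul_binQuadric_zero_mem hc
  exact X_mul_binQuadric_zero_mem_of_far (by omega) (by omega)

theorem mul_binQuadric_zero_mem_of_mem_span (hc : 6 ≤ c) {ℓ : MvPolynomial (ZMod c) ℚ}
    (hs : ℓ ∈ Submodule.span ℚ {p | ∃ n : ℕ, 2 ≤ n ∧ n ≤ c - 3 ∧ p = X (n : ZMod c)}) :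
    ℓ * binQuadric c 0 ∈ colonSourceIdeal c := by
  refine Submodule.span_le (p := ((colonSourceIdeal c).restrictScalars ℚ).comap
    (LinearMap.mulRight ℚ (binQuadric c 0))) |>.2 ?_ hs
  rintro _ ⟨n, h2, h3, rfl⟩
  exact X_natCast_mul_binQuadric_zero_mem hc h2 h3

end Membership

section TruncWeight

variable {c : ℕ}

/-- The image of `x_i` under the map `S → ℚ[t]/(t⁶)` detecting the coefficients of `x_0`,
`x_1`, `x_{-2}`, `x_{-1}` is `t ^ truncWeight i`; weight `6` stands for `0`. -/
def truncWeight (i : ZMod c) : ℕ :=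
  if i = 0 then 0 else if i = 1 then 2 else if i = -2 then 4 else if i = -1 then 5 else 6

theorem truncWeight_cases (i : ZMod c) :
    i = 0 ∧ truncWeight i = 0 ∨ i = 1 ∧ truncWeight i = 2 ∨ i = -2 ∧ truncWeight i = 4 ∨
      i = -1 ∧ truncWeight i = 5 ∨ truncWeight i = 6 := by
  unfold truncWeight
  split_ifs <;> simp_all

theorem truncWeight_zero : truncWeight (0 : ZMod c) = 0 := by
  simp [truncWeight]

theorem eq_of_truncWeight_eq {i j : ZMod c} (h : truncWeight j = truncWeight i)
    (hi : truncWeight i < 6) : j = i := by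
  rcases truncWeight_cases i with ⟨rfl, hi'⟩ | ⟨rfl, hi'⟩ | ⟨rfl, hi'⟩ | ⟨rfl, hi'⟩ | hi' <;>
  rcases truncWeight_cases j with ⟨rfl, hj'⟩ | ⟨rfl, hj'⟩ | ⟨rfl, hj'⟩ | ⟨rfl, hj'⟩ | hj' <;>
  first | rfl | omega

theorem eq_of_truncWeight_add_lt {i j : ZMod c} (h : truncWeight i + truncWeight j < 6) :
    i = 0 ∨ j = 0 ∨ i = 1 ∧ j = 1 := by
  rcases truncWeight_cases i with ⟨rfl, hi'⟩ | ⟨rfl, hi'⟩ | ⟨rfl, hi'⟩ | ⟨rfl, hi'⟩ | hi' <;>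
  rcases truncWeight_cases j with ⟨rfl, hj'⟩ | ⟨rfl, hj'⟩ | ⟨rfl, hj'⟩ | ⟨rfl, hj'⟩ | hj' <;>
  first | omega | simp

theorem six_le_truncWeight_add {i j : ZMod c} (hij : 3 ≤ (i - j).val) (hji : 3 ≤ (j - i).val) :
    6 ≤ truncWeight i + truncWeight j := by
  by_contra h
  have near_zero : ∀ {k : ZMod c}, truncWeight k < 6 → 3 ≤ (-k).val → 3 ≤ k.val → False := by
    intro k hk h1 h2
    rcases truncWeight_cases k with ⟨rfl, -⟩ | ⟨rfl, -⟩ | ⟨rfl, -⟩ | ⟨rfl, -⟩ | hk'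
    · have := ZMod.val_le_two (d := (0 : ZMod c)) (by simp); omega
    · have := ZMod.val_le_two (d := (1 : ZMod c)) (by simp); omega
    · have := ZMod.val_le_two (d := -(-2 : ZMod c)) (by simp); omega
    · have := ZMod.val_le_two (d := -(-1 : ZMod c)) (by simp); omega
    · omega
  rcases eq_of_truncWeight_add_lt (not_le.1 h) with rfl | rfl | ⟨rfl, rfl⟩
  · rw [zero_sub] at hij; rw [sub_zero] at hji
    exact near_zero (k := j) (by rw [truncWeight_zero] at h; omega) hij hji
  · rw [zero_sub] at hji; rw [sub_zero] at hij
    exact near_zero (k := i) (by rw [truncWeight_zero] at h; omega) hji hij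
  · simp at hij

theorem truncWeight_binQuadric (hc : 5 ≤ c) {i : ZMod c} (hi : i ≠ 0) :
    2 * truncWeight i = truncWeight (i - 1) + truncWeight (i - 3) ∨
      6 ≤ 2 * truncWeight i ∧ 6 ≤ truncWeight (i - 1) + truncWeight (i - 3) := by
  have ne : ∀ k : ℕ, 0 < k → k < c → (k : ZMod c) ≠ 0 := fun _ => ZMod.natCast_ne_zero_of_lt
  have h1 : (1 : ZMod c) ≠ 0 := by exact_mod_cast ne 1 (by omega) (by omega)
  have h2 : (2 : ZMod c) ≠ 0 := by exact_mod_cast ne 2 (by omega) (by omega)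
  have h3 : (3 : ZMod c) ≠ 0 := by exact_mod_cast ne 3 (by omega) (by omega)
  have h4 : (4 : ZMod c) ≠ 0 := by exact_mod_cast ne 4 (by omega) (by omega)
  by_cases hi1 : i = 1
  · subst hi1
    left
    have e1 : (-2 : ZMod c) ≠ 0 := neg_ne_zero.2 h2
    have e2 : (-2 : ZMod c) ≠ 1 := fun h => h3 (by linear_combination -h)
    norm_num [truncWeight, h1, e1, e2]
  right
  constructor
  · by_contra h
    rcases eq_of_truncWeight_add_lt (i := i) (j := i) (by omega) with h | h | h <;> tauto
  · by_contra h
    rcases eq_of_truncWeight_add_lt (not_le.1 h) with h' | h' | ⟨h', h''⟩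
    · exact hi1 (sub_eq_zero.1 h')
    · obtain rfl : i = 3 := sub_eq_zero.1 h'
      have e : truncWeight (2 : ZMod c) = 6 := by
        have e1 : (2 : ZMod c) ≠ 1 := fun h => h1 (by linear_combination h)
        have e2 : (2 : ZMod c) ≠ -2 := fun h => h4 (by linear_combination h)
        have e3 : (2 : ZMod c) ≠ -1 := fun h => h3 (by linear_combination h)
        simp [truncWeight, h2, e1, e2, e3]
      norm_num [e] at h
    · exact h2 (by linear_combination h' - h'')

theorem six_le_truncWeight_neg_one_add_neg_three (hc : 4 ≤ c) :
    6 ≤ truncWeight (-1 : ZMod c) + truncWeight (-3 : ZMod c) := by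
  have ne : ∀ k : ℕ, 0 < k → k < c → (k : ZMod c) ≠ 0 := fun _ => ZMod.natCast_ne_zero_of_lt
  by_contra h
  rcases eq_of_truncWeight_add_lt (not_le.1 h) with h' | h' | ⟨h', -⟩
  · exact ne 1 (by omega) (by omega) (by simpa using h')
  · exact ne 3 (by omega) (by omega) (by simpa using h')
  · exact ne 2 (by omega) (by omega) (by push_cast; linear_combination -h')

theorem exists_natCast_eq_of_six_le_truncWeight [NeZero c] {i : ZMod c}
    (h : 6 ≤ truncWeight i) : ∃ n : ℕ, 2 ≤ n ∧ n ≤ c - 3 ∧ (n : ZMod c) = i := by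
  unfold truncWeight at h
  split_ifs at h with h0 h1 h2 h3 <;> try omega
  have hv : ((i.val : ℕ) : ZMod c) = i := ZMod.natCast_zmod_val i
  refine ⟨i.val, ?_, ?_, hv⟩
  · have : i.val ≠ 0 := fun h => h0 ((ZMod.val_eq_zero i).1 h)
    have : i.val ≠ 1 := fun h => h1 (by rw [← hv, h, Nat.cast_one])
    omega
  · have := ZMod.val_lt i
    have : i.val ≠ c - 1 := fun h => h3 (by
      rw [← hv, h, ZMod.natCast_sub_self_left (by omega), Nat.cast_one])
    have : i.val ≠ c - 2 := fun h => h2 (by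
      rw [← hv, h, ZMod.natCast_sub_self_left (by omega), Nat.cast_two])
    omega

end TruncWeight

section Forward

variable {c : ℕ} [NeZero c]

theorem X_pow_six_dvd_aeval_of_mem (hc : 5 ≤ c) {p : MvPolynomial (ZMod c) ℚ}
    (hp : p ∈ colonSourceIdeal c) :
    (Polynomial.X ^ 6 : Polynomial ℚ) ∣ aeval (fun i => Polynomial.X ^ truncWeight i) p := by
  rw [← Ideal.mem_span_singleton, ← Ideal.mem_comap]
  refine (Ideal.span_le.2 ?_) hp
  rintro _ (⟨i, hi, rfl⟩ | ⟨i, j, hij, hji, rfl⟩) <;>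
    simp only [SetLike.mem_coe, Ideal.mem_comap, Ideal.mem_span_singleton]
  · simp only [binQuadric, map_sub, map_pow, map_mul, aeval_X, ← pow_mul, ← pow_add, mul_comm _ 2]
    exact pow_dvd_pow_sub_pow _ (truncWeight_binQuadric hc hi)
  · simp only [map_mul, aeval_X, ← pow_add]
    exact pow_dvd_pow _ (six_le_truncWeight_add hij hji)

theorem aeval_binQuadric_zero :
    aeval (fun i => Polynomial.X ^ truncWeight i) (binQuadric c 0) =
      (1 - Polynomial.X ^ (truncWeight (-1 : ZMod c) + truncWeight (-3 : ZMod c)) :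
        Polynomial ℚ) := by
  simp [binQuadric, truncWeight_zero, pow_add]

theorem mem_span_X_of_mul_binQuadric_zero_mem (hc : 5 ≤ c) {ℓ : MvPolynomial (ZMod c) ℚ}
    (hl : ℓ ∈ homogeneousSubmodule (ZMod c) ℚ 1) (h : ℓ * binQuadric c 0 ∈ colonSourceIdeal c) :
    ℓ ∈ Submodule.span ℚ {p | ∃ n : ℕ, 2 ≤ n ∧ n ≤ c - 3 ∧ p = X (n : ZMod c)} := by
  rw [homogeneousSubmodule_one_eq_span_X, Submodule.mem_span_range_iff_exists_fun] at hl
  obtain ⟨a, rfl⟩ := hl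
  have hdvd : (Polynomial.X ^ 6 : Polynomial ℚ) ∣ ∑ i, a i • Polynomial.X ^ truncWeight i := by
    have := X_pow_six_dvd_aeval_of_mem hc h
    rw [map_mul, aeval_binQuadric_zero] at this
    refine dvd_of_dvd_mul_one_sub (by simpa using this)
      (pow_dvd_pow _ (six_le_truncWeight_neg_one_add_neg_three (by omega)))
  have ha : ∀ i, truncWeight i < 6 → a i = 0 := fun i hi => by
    rw [← Polynomial.coeff_sum_smul_X_pow a truncWeight (fun j hj => eq_of_truncWeight_eq hj hi)]
    exact Polynomial.X_pow_dvd_iff.1 hdvd _ hi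
  refine Submodule.sum_mem _ fun i _ => ?_
  rcases lt_or_ge (truncWeight i) 6 with hi | hi
  · simp [ha i hi]
  · obtain ⟨n, h2, h3, rfl⟩ := exists_natCast_eq_of_six_le_truncWeight hi
    exact Submodule.smul_mem _ _ (Submodule.subset_span ⟨n, h2, h3, rfl⟩)

end Forward

/-- For `c ≥ 7` and a linear form `ℓ`, one has `ℓ·q_0 ∈ L` if and only if `ℓ` lies in
the `ℚ`-span of `x_2, x_3, …, x_{c−3}`; that is, `(L : q_0)₁ = (x_2, …, x_{c−3})₁`. -/
theorem colon_ideal_linear_part (c : ℕ) (hc : 7 ≤ c) [NeZero c]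
    (ℓ : MvPolynomial (ZMod c) ℚ) (hl : ℓ ∈ homogeneousSubmodule (ZMod c) ℚ 1) :
    ℓ * binQuadric c 0 ∈ colonSourceIdeal c ↔
      ℓ ∈ Submodule.span ℚ {p : MvPolynomial (ZMod c) ℚ |
        ∃ n : ℕ, 2 ≤ n ∧ n ≤ c - 3 ∧ p = X (n : ZMod c)} :=
  ⟨mem_span_X_of_mul_binQuadric_zero_mem (by omega) hl,
    mul_binQuadric_zero_mem_of_mem_span (by omega)⟩
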